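/- Let A and B be finite-dimensional k-algebras, M an A-B-bimodule and N a B-A-bimodule such that the regular A-A-bimodule A is isomorphic to a direct summand of M ⊗_B N and the regular B-B-bimodule B is isomorphic to a direct summand of N ⊗_A M. If the functors M ⊗_B − : B-mod → A-mod and N ⊗_A − : A-mod → B-mod are biadjoint (each is both left and right adjoint to the other), then M is projective as a left A-module and as a right B-module, and N is projective as a left B-module and as a right A-module; consequently A and B are symmetrically separably equivalent. -/

import Mathlib

set_option linter.unusedSectionVars false

open scoped TensorProduct
open MulOpposite

universe u

attribute [local instance 2000] TensorProduct.instModule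

namespace JJ

noncomputable section

section BalTensor

variable (B : Type u) [Ring B] (M : Type u) [AddCommGroup M] [Module Bᵐᵒᵖ M]
  (N : Type u) [AddCommGroup N] [Module B N]

/-- The subgroup of relations defining the balanced tensor product `M ⊗_B N`. -/
def balRel : Submodule ℤ (TensorProduct ℤ M N) :=
  Submodule.span ℤ { z | ∃ (b : B) (m : M) (n : N),
    z = (op b • m) ⊗ₜ[ℤ] n - m ⊗ₜ[ℤ] (b • n) }

/-- The balanced tensor product `M ⊗_B N` of a right `B`-module `M` and a left `B`-module `N`. -/
def BalTensor : Type u := TensorProduct ℤ M N ⧸ balRel B M N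

instance : AddCommGroup (BalTensor B M N) :=
  inferInstanceAs (AddCommGroup (TensorProduct ℤ M N ⧸ balRel B M N))

/-- The canonical projection onto the balanced tensor product. -/
def BalTensor.mk : TensorProduct ℤ M N →+ BalTensor B M N :=
  (balRel B M N).mkQ.toAddMonoidHom

/-- The image of a pure tensor in the balanced tensor product. -/
def BalTensor.tmul (m : M) (n : N) : BalTensor B M N := BalTensor.mk B M N (m ⊗ₜ n)

lemma BalTensor.mk_surjective : Function.Surjective (BalTensor.mk B M N) :=
  Submodule.mkQ_surjective _

lemma BalTensor.balance (b : B) (m : M) (n : N) :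
    BalTensor.tmul B M N (op b • m) n = BalTensor.tmul B M N m (b • n) := by
  have h : ((op b • m) ⊗ₜ[ℤ] n - m ⊗ₜ[ℤ] (b • n)) ∈ balRel B M N :=
    Submodule.subset_span ⟨b, m, n, rfl⟩
  have h2 := (Submodule.Quotient.mk_eq_zero (balRel B M N)).2 h
  rw [Submodule.Quotient.mk_sub] at h2
  exact sub_eq_zero.1 h2

end BalTensor

section LeftAction

variable (B : Type u) [Ring B] (M : Type u) [AddCommGroup M] [Module Bᵐᵒᵖ M]
  (N : Type u) [AddCommGroup N] [Module B N]
  (A : Type u) [Ring A] [Module A M] [SMulCommClass A Bᵐᵒᵖ M]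

/-- The left action of `a : A` on the plain tensor product. -/
def lActAux (a : A) : TensorProduct ℤ M N →ₗ[ℤ] TensorProduct ℤ M N :=
  LinearMap.rTensor N (DistribMulAction.toAddMonoidHom M a).toIntLinearMap

lemma lActAux_tmul (a : A) (m : M) (n : N) :
    lActAux M N A a (m ⊗ₜ n) = (a • m) ⊗ₜ n := by
  simp [lActAux]

lemma lActAux_rel (a : A) :
    balRel B M N ≤ (balRel B M N).comap (lActAux M N A a) := by
  rw [balRel, Submodule.span_le]
  rintro z ⟨b, m, n, rfl⟩
  simp only [SetLike.mem_coe, Submodule.mem_comap, map_sub, lActAux_tmul]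
  rw [smul_comm a (op b) m]
  exact Submodule.subset_span ⟨b, a • m, n, rfl⟩

/-- The left action of `A` on the balanced tensor product. -/
def lAct (a : A) : BalTensor B M N →ₗ[ℤ] BalTensor B M N :=
  Submodule.mapQ _ _ (lActAux M N A a) (lActAux_rel B M N A a)

instance : SMul A (BalTensor B M N) := ⟨fun a x => lAct B M N A a x⟩

lemma BalTensor.lsmul_mk (a : A) (x : TensorProduct ℤ M N) :
    a • (BalTensor.mk B M N x) = BalTensor.mk B M N (lActAux M N A a x) := rfl

lemma BalTensor.lsmul_tmul (a : A) (m : M) (n : N) :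
    a • (BalTensor.tmul B M N m n) = BalTensor.tmul B M N (a • m) n := by
  rw [BalTensor.tmul, BalTensor.lsmul_mk, lActAux_tmul]
  rfl

instance BalTensor.instLeftModule : Module A (BalTensor B M N) where
  one_smul x := by
    obtain ⟨y, rfl⟩ := BalTensor.mk_surjective B M N x
    rw [BalTensor.lsmul_mk]
    congr 1
    have h : lActAux M N A (1 : A) = LinearMap.id :=
      TensorProduct.ext' fun m n => by rw [lActAux_tmul, one_smul]; rfl
    rw [h]; rfl
  mul_smul a b x := by
    obtain ⟨y, rfl⟩ := BalTensor.mk_surjective B M N x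
    rw [BalTensor.lsmul_mk, BalTensor.lsmul_mk, BalTensor.lsmul_mk]
    congr 1
    have h : lActAux M N A (a * b) = (lActAux M N A a).comp (lActAux M N A b) :=
      TensorProduct.ext' fun m n => by
        simp only [LinearMap.comp_apply, lActAux_tmul, mul_smul]
    rw [h]; rfl
  smul_zero a := map_zero (lAct B M N A a)
  smul_add a x y := map_add (lAct B M N A a) x y
  add_smul a b x := by
    obtain ⟨y, rfl⟩ := BalTensor.mk_surjective B M N x
    rw [BalTensor.lsmul_mk, BalTensor.lsmul_mk, BalTensor.lsmul_mk, ← map_add]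
    congr 1
    have h : lActAux M N A (a + b) = lActAux M N A a + lActAux M N A b :=
      TensorProduct.ext' fun m n => by
        simp only [LinearMap.add_apply, lActAux_tmul, add_smul, TensorProduct.add_tmul]
    rw [h]; rfl
  zero_smul x := by
    obtain ⟨y, rfl⟩ := BalTensor.mk_surjective B M N x
    rw [BalTensor.lsmul_mk]
    have h : lActAux M N A (0 : A) = 0 :=
      TensorProduct.ext' fun m n => by
        simp only [lActAux_tmul, zero_smul, TensorProduct.zero_tmul, LinearMap.zero_apply]
    rw [h]
    simp

end LeftAction

section RightAction

variable (B : Type u) [Ring B] (M : Type u) [AddCommGroup M] [Module Bᵐᵒᵖ M]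
  (N : Type u) [AddCommGroup N] [Module B N]
  (C : Type u) [Ring C] [Module Cᵐᵒᵖ N] [SMulCommClass B Cᵐᵒᵖ N]

/-- The right action of `c : Cᵐᵒᵖ` on the plain tensor product. -/
def rActAux (c : Cᵐᵒᵖ) : TensorProduct ℤ M N →ₗ[ℤ] TensorProduct ℤ M N :=
  LinearMap.lTensor M (DistribMulAction.toAddMonoidHom N c).toIntLinearMap

lemma rActAux_tmul (c : Cᵐᵒᵖ) (m : M) (n : N) :
    rActAux M N C c (m ⊗ₜ n) = m ⊗ₜ (c • n) := by
  simp [rActAux]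

lemma rActAux_rel (c : Cᵐᵒᵖ) :
    balRel B M N ≤ (balRel B M N).comap (rActAux M N C c) := by
  rw [balRel, Submodule.span_le]
  rintro z ⟨b, m, n, rfl⟩
  simp only [SetLike.mem_coe, Submodule.mem_comap, map_sub, rActAux_tmul]
  rw [← smul_comm b c n]
  exact Submodule.subset_span ⟨b, m, c • n, rfl⟩

/-- The right action of `Cᵐᵒᵖ` on the balanced tensor product. -/
def rAct (c : Cᵐᵒᵖ) : BalTensor B M N →ₗ[ℤ] BalTensor B M N :=
  Submodule.mapQ _ _ (rActAux M N C c) (rActAux_rel B M N C c)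

instance : SMul Cᵐᵒᵖ (BalTensor B M N) := ⟨fun c x => rAct B M N C c x⟩

lemma BalTensor.rsmul_mk (c : Cᵐᵒᵖ) (x : TensorProduct ℤ M N) :
    c • (BalTensor.mk B M N x) = BalTensor.mk B M N (rActAux M N C c x) := rfl

lemma BalTensor.rsmul_tmul (c : Cᵐᵒᵖ) (m : M) (n : N) :
    c • (BalTensor.tmul B M N m n) = BalTensor.tmul B M N m (c • n) := by
  rw [BalTensor.tmul, BalTensor.rsmul_mk, rActAux_tmul]
  rfl

instance BalTensor.instRightModule : Module Cᵐᵒᵖ (BalTensor B M N) where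
  one_smul x := by
    obtain ⟨y, rfl⟩ := BalTensor.mk_surjective B M N x
    rw [BalTensor.rsmul_mk]
    congr 1
    have h : rActAux M N C (1 : Cᵐᵒᵖ) = LinearMap.id :=
      TensorProduct.ext' fun m n => by rw [rActAux_tmul, one_smul]; rfl
    rw [h]; rfl
  mul_smul a b x := by
    obtain ⟨y, rfl⟩ := BalTensor.mk_surjective B M N x
    rw [BalTensor.rsmul_mk, BalTensor.rsmul_mk, BalTensor.rsmul_mk]
    congr 1
    have h : rActAux M N C (a * b) = (rActAux M N C a).comp (rActAux M N C b) :=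
      TensorProduct.ext' fun m n => by
        simp only [LinearMap.comp_apply, rActAux_tmul, mul_smul]
    rw [h]; rfl
  smul_zero c := map_zero (rAct B M N C c)
  smul_add c x y := map_add (rAct B M N C c) x y
  add_smul a b x := by
    obtain ⟨y, rfl⟩ := BalTensor.mk_surjective B M N x
    rw [BalTensor.rsmul_mk, BalTensor.rsmul_mk, BalTensor.rsmul_mk, ← map_add]
    congr 1
    have h : rActAux M N C (a + b) = rActAux M N C a + rActAux M N C b :=
      TensorProduct.ext' fun m n => by
        simp only [LinearMap.add_apply, rActAux_tmul, add_smul, TensorProduct.tmul_add]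
    rw [h]; rfl
  zero_smul x := by
    obtain ⟨y, rfl⟩ := BalTensor.mk_surjective B M N x
    rw [BalTensor.rsmul_mk]
    have h : rActAux M N C (0 : Cᵐᵒᵖ) = 0 :=
      TensorProduct.ext' fun m n => by
        simp only [rActAux_tmul, zero_smul, TensorProduct.tmul_zero, LinearMap.zero_apply]
    rw [h]
    simp

end RightAction

section Comm

variable (B : Type u) [Ring B] (M : Type u) [AddCommGroup M] [Module Bᵐᵒᵖ M]
  (N : Type u) [AddCommGroup N] [Module B N]
  (A : Type u) [Ring A] [Module A M] [SMulCommClass A Bᵐᵒᵖ M]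
  (C : Type u) [Ring C] [Module Cᵐᵒᵖ N] [SMulCommClass B Cᵐᵒᵖ N]

instance BalTensor.instSMulCommClass : SMulCommClass A Cᵐᵒᵖ (BalTensor B M N) := by
  constructor
  intro a c x
  obtain ⟨y, rfl⟩ := BalTensor.mk_surjective B M N x
  rw [BalTensor.rsmul_mk, BalTensor.lsmul_mk, BalTensor.lsmul_mk, BalTensor.rsmul_mk]
  congr 1
  have h : (lActAux M N A a).comp (rActAux M N C c)
      = (rActAux M N C c).comp (lActAux M N A a) :=
    TensorProduct.ext' fun m n => by
      simp only [LinearMap.comp_apply, lActAux_tmul, rActAux_tmul]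
  exact DFunLike.congr_fun h y

end Comm

section BimodHom

variable (A : Type u) [Ring A] (C : Type u) [Ring C]
variable (X : Type u) [AddCommGroup X] [Module A X] [Module Cᵐᵒᵖ X]
variable (Y : Type u) [AddCommGroup Y] [Module A Y] [Module Cᵐᵒᵖ Y]

/-- A map of `(A,C)`-bimodules: additive, left `A`-equivariant and right `C`-equivariant. -/
structure IsBimodHom (f : X → Y) : Prop where
  map_add : ∀ x y, f (x + y) = f x + f y
  map_lsmul : ∀ (a : A) (x : X), f (a • x) = a • f x
  map_rsmul : ∀ (c : Cᵐᵒᵖ) (x : X), f (c • x) = c • f x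

/-- `X` is (isomorphic to) a direct summand of `Y` as an `(A,C)`-bimodule,
i.e. a retract of `Y`. -/
def IsBimodSummand : Prop :=
  ∃ (i : X → Y) (p : Y → X), IsBimodHom A C X Y i ∧ IsBimodHom A C Y X p ∧ ∀ x, p (i x) = x

end BimodHom

section Jorder

variable (k : Type u) [Field k]

/-- A finite-dimensional `(A,B)`-bimodule over `k`, whose two induced `k`-actions agree
with the given one. -/
structure BimodData (A B : Type u) [Ring A] [Ring B] [Algebra k A] [Algebra k B] :
    Type (u + 1) where
  X : Type u
  [acg : AddCommGroup X]
  [modk : Module k X]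
  [modl : Module A X]
  [modr : Module Bᵐᵒᵖ X]
  [scc : SMulCommClass A Bᵐᵒᵖ X]
  [tl : IsScalarTower k A X]
  [tr : IsScalarTower k Bᵐᵒᵖ X]
  [fd : FiniteDimensional k X]

attribute [instance] BimodData.acg BimodData.modk BimodData.modl BimodData.modr BimodData.scc
  BimodData.tl BimodData.tr BimodData.fd

variable (A B : Type u) [Ring A] [Ring B] [Algebra k A] [Algebra k B]

/-- `A ≥_J B`: there are finite-dimensional bimodules `M`, `N` such that the regular
`A`-`A`-bimodule `A` is a direct summand of `M ⊗_B N`. -/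
def Jge : Prop :=
  ∃ (M : BimodData k A B) (N : BimodData k B A),
    IsBimodSummand A A A (BalTensor B M.X N.X)

/-- `A ≤_J B`. -/
def Jle : Prop := Jge k B A

/-- `A ∼_J B`: two-sided equivalence. -/
def Jequiv : Prop := Jge k A B ∧ Jge k B A

/-- `A >_J B`: strict two-sided inequality. -/
def Jgt : Prop := Jge k A B ∧ ¬ Jge k B A

end Jorder


section RMap

variable (B : Type u) [Ring B] (M : Type u) [AddCommGroup M] [Module Bᵐᵒᵖ M]
  (A : Type u) [Ring A] [Module A M] [SMulCommClass A Bᵐᵒᵖ M]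
  (X : Type u) [AddCommGroup X] [Module B X]
  (X' : Type u) [AddCommGroup X'] [Module B X']

/-- Auxiliary map `M ⊗ X → M ⊗ X'` induced by `f : X → X'`. -/
def rmapAux (f : X →ₗ[B] X') : TensorProduct ℤ M X →ₗ[ℤ] TensorProduct ℤ M X' :=
  LinearMap.lTensor M f.toAddMonoidHom.toIntLinearMap

lemma rmapAux_tmul (f : X →ₗ[B] X') (m : M) (x : X) :
    rmapAux B M X X' f (m ⊗ₜ x) = m ⊗ₜ (f x) := by
  simp [rmapAux]

lemma rmapAux_rel (f : X →ₗ[B] X') :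
    balRel B M X ≤ (balRel B M X').comap (rmapAux B M X X' f) := by
  rw [balRel, Submodule.span_le]
  rintro z ⟨b, m, x, rfl⟩
  simp only [SetLike.mem_coe, Submodule.mem_comap, map_sub, rmapAux_tmul, map_smul]
  exact Submodule.subset_span ⟨b, m, f x, rfl⟩

/-- The map `M ⊗_B X → M ⊗_B X'` induced by `f : X → X'`, as a `ℤ`-linear map. -/
def rmapQ (f : X →ₗ[B] X') : BalTensor B M X →ₗ[ℤ] BalTensor B M X' :=
  Submodule.mapQ _ _ (rmapAux B M X X' f) (rmapAux_rel B M X X' f)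

lemma rmapQ_mk (f : X →ₗ[B] X') (z : TensorProduct ℤ M X) :
    rmapQ B M X X' f (BalTensor.mk B M X z) = BalTensor.mk B M X' (rmapAux B M X X' f z) :=
  rfl

lemma rmapAux_lActAux (f : X →ₗ[B] X') (a : A) (z : TensorProduct ℤ M X) :
    rmapAux B M X X' f (lActAux M X A a z) = lActAux M X' A a (rmapAux B M X X' f z) := by
  have h : (rmapAux B M X X' f).comp (lActAux M X A a)
      = (lActAux M X' A a).comp (rmapAux B M X X' f) := by
    unfold rmapAux lActAux
    rw [LinearMap.lTensor_comp_rTensor, LinearMap.rTensor_comp_lTensor]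
  exact DFunLike.congr_fun h z

/-- The functorial map `M ⊗_B X → M ⊗_B X'` induced by `f : X → X'`,
as a map of left `A`-modules. -/
def rmapA (f : X →ₗ[B] X') : BalTensor B M X →ₗ[A] BalTensor B M X' where
  toFun := rmapQ B M X X' f
  map_add' := map_add _
  map_smul' a y := by
    obtain ⟨z, rfl⟩ := BalTensor.mk_surjective B M X y
    simp only [RingHom.id_apply]
    rw [BalTensor.lsmul_mk, rmapQ_mk, rmapQ_mk, BalTensor.lsmul_mk, rmapAux_lActAux]

end RMap

section Adjunction

variable (k : Type u) [Field k]

/-- A bundled finite (i.e. finite-dimensional) module over a ring. -/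
structure FinModuleData (R : Type u) [Ring R] : Type (u + 1) where
  X : Type u
  [acg : AddCommGroup X]
  [mod : Module R X]
  [fin : Module.Finite R X]

attribute [instance] FinModuleData.acg FinModuleData.mod FinModuleData.fin

variable (A : Type u) [Ring A] (B : Type u) [Ring B]
  (M : Type u) [AddCommGroup M] [Module A M] [Module Bᵐᵒᵖ M] [SMulCommClass A Bᵐᵒᵖ M]
  (N : Type u) [AddCommGroup N] [Module B N] [Module Aᵐᵒᵖ N] [SMulCommClass B Aᵐᵒᵖ N]

/-- The functor `M ⊗_B −` from finite-dimensional left `B`-modules to finite-dimensional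
left `A`-modules is left adjoint to the functor `N ⊗_A −`: there is a bijection of
hom-sets which is natural in both variables. -/
def TensorAdjunction : Prop :=
  ∃ e : ∀ (X : FinModuleData B) (Y : FinModuleData A),
      (BalTensor B M X.X →ₗ[A] Y.X) ≃ (X.X →ₗ[B] BalTensor A N Y.X),
    (∀ (X X' : FinModuleData B) (f : X.X →ₗ[B] X'.X) (Y : FinModuleData A)
        (h : BalTensor B M X'.X →ₗ[A] Y.X),
        e X Y (h.comp (rmapA B M A X.X X'.X f)) = (e X' Y h).comp f) ∧
    (∀ (X : FinModuleData B) (Y Y' : FinModuleData A) (g : Y.X →ₗ[A] Y'.X)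
        (h : BalTensor B M X.X →ₗ[A] Y.X),
        e X Y' (g.comp h) = (rmapA A N B Y.X Y'.X g).comp (e X Y h))

end Adjunction
section Stmt7

variable (k : Type u) [Field k]
variable (A B : Type u) [Ring A] [Ring B] [Algebra k A] [Algebra k B]

/-- `A` and `B` are symmetrically separably equivalent: there are bimodules `M` and `N`,
projective on either side, such that `A` is a direct summand of `M ⊗_B N`, `B` is a direct
summand of `N ⊗_A M`, and the functors `M ⊗_B −` and `N ⊗_A −` are biadjoint. -/
def SymSepEquiv : Prop :=
  ∃ (M : BimodData k A B) (N : BimodData k B A),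
    Module.Projective A M.X ∧ Module.Projective Bᵐᵒᵖ M.X ∧
    Module.Projective B N.X ∧ Module.Projective Aᵐᵒᵖ N.X ∧
    IsBimodSummand A A A (BalTensor B M.X N.X) ∧
    IsBimodSummand B B B (BalTensor A N.X M.X) ∧
    TensorAdjunction A B M.X N.X ∧ TensorAdjunction B A N.X M.X

end Stmt7


/-!
Since `M ⊗_B B ≅ M`, the adjunction `Hom_A(M ⊗_B X, Y) ≅ Hom_B(X, N ⊗_A Y)` at `X = B` is a
natural isomorphism `Hom_A(M, −) ≅ N ⊗_A −` on finite left `A`-modules. The right-hand side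
preserves surjections, so the identity of `M` lifts along any surjection `Aⁿ → M`: `M` is
projective. At `Y = A` the isomorphism reads `N ≅ Hom_A(M, A)` as right `A`-modules, and the
dual of a finite projective module is projective. The second adjunction gives the same for `N`
and `M` with the roles of `A` and `B` exchanged.
-/

section BalTensorLemmas

variable {B : Type u} [Ring B] {M : Type u} [AddCommGroup M] [Module Bᵐᵒᵖ M]
  {N : Type u} [AddCommGroup N] [Module B N]

@[elab_as_elim]
theorem BalTensor.induction_on {P : BalTensor B M N → Prop} (x : BalTensor B M N)
    (zero : P 0) (tmul : ∀ m n, P (BalTensor.tmul B M N m n))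
    (add : ∀ x y, P x → P y → P (x + y)) : P x := by
  obtain ⟨z, rfl⟩ := BalTensor.mk_surjective B M N x
  induction z using TensorProduct.induction_on with
  | zero => simpa using zero
  | tmul m n => exact tmul m n
  | add z w hz hw => simpa using add _ _ hz hw

theorem BalTensor.ext {Z : Type u} [AddCommGroup Z] {f g : BalTensor B M N →ₗ[ℤ] Z}
    (h : ∀ m n, f (BalTensor.tmul B M N m n) = g (BalTensor.tmul B M N m n)) : f = g :=
  Submodule.linearMap_qext _ (TensorProduct.ext' h)

theorem BalTensor.tmul_add (m : M) (n n' : N) :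
    BalTensor.tmul B M N m (n + n') = BalTensor.tmul B M N m n + BalTensor.tmul B M N m n' := by
  rw [BalTensor.tmul, TensorProduct.tmul_add, map_add]; rfl

variable (B M N) in
def BalTensor.lift {Z : Type u} [AddCommGroup Z] (f : M →ₗ[ℤ] N →ₗ[ℤ] Z)
    (hf : ∀ (b : B) m n, f (op b • m) n = f m (b • n)) : BalTensor B M N →ₗ[ℤ] Z :=
  (balRel B M N).liftQ (TensorProduct.lift f) <| by
    rw [balRel, Submodule.span_le]
    rintro _ ⟨b, m, n, rfl⟩
    simp [hf]

variable (B M) in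
def BalTensor.rid : BalTensor B M B ≃+ M where
  toFun := BalTensor.lift B M B
    (LinearMap.mk₂ ℤ (fun m b => op b • m) (fun _ _ _ => smul_add ..)
      (fun c m b => smul_comm (op b) c m) (fun m b b' => by rw [op_add, add_smul])
      (fun c m b => by rw [op_smul, smul_assoc]))
    (fun b m b' => by simp [mul_smul])
  invFun m := BalTensor.tmul B M B m 1
  map_add' := map_add _
  left_inv x := by
    induction x using BalTensor.induction_on with
    | zero => simp [BalTensor.tmul]
    | tmul m b =>
      change BalTensor.tmul B M B (op b • m) 1 = _
      rw [BalTensor.balance, smul_eq_mul, mul_one]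
    | add x y hx hy =>
      simp only [map_add, BalTensor.tmul, TensorProduct.add_tmul] at hx hy ⊢
      rw [hx, hy]
  right_inv m := by
    change op (1 : B) • m = m
    rw [op_one, one_smul]

theorem BalTensor.rid_tmul (m : M) (b : B) :
    BalTensor.rid B M (BalTensor.tmul B M B m b) = op b • m :=
  rfl

theorem BalTensor.rid_smul {A : Type u} [Ring A] [Module A M] [SMulCommClass A Bᵐᵒᵖ M]
    (a : A) (x : BalTensor B M B) : BalTensor.rid B M (a • x) = a • BalTensor.rid B M x := by
  induction x using BalTensor.induction_on with
  | zero => simp only [smul_zero, map_zero]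
  | tmul m b =>
    rw [BalTensor.lsmul_tmul, BalTensor.rid_tmul, BalTensor.rid_tmul]
    exact (smul_comm a (op b) m).symm
  | add x y hx hy => simp only [smul_add, map_add, hx, hy]

end BalTensorLemmas

section RMapQ

variable {B : Type u} [Ring B] {M : Type u} [AddCommGroup M] [Module Bᵐᵒᵖ M]
  {X : Type u} [AddCommGroup X] [Module B X] {X' : Type u} [AddCommGroup X'] [Module B X']

theorem rmapQ_tmul (f : X →ₗ[B] X') (m : M) (x : X) :
    rmapQ B M X X' f (BalTensor.tmul B M X m x) = BalTensor.tmul B M X' m (f x) := by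
  rw [BalTensor.tmul, rmapQ_mk, rmapAux_tmul]
  rfl

theorem rmapQ_surjective {f : X →ₗ[B] X'} (hf : Function.Surjective f) :
    Function.Surjective (rmapQ B M X X' f) := by
  intro y
  change y ∈ LinearMap.range (rmapQ B M X X' f)
  induction y using BalTensor.induction_on with
  | zero => exact zero_mem _
  | tmul m x' =>
    obtain ⟨x, rfl⟩ := hf x'
    exact ⟨_, rmapQ_tmul f m x⟩
  | add y y' hy hy' => exact add_mem hy hy'

theorem rmapQ_add (f g : X →ₗ[B] X') :
    rmapQ B M X X' (f + g) = rmapQ B M X X' f + rmapQ B M X X' g :=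
  BalTensor.ext fun m x => by
    simp only [LinearMap.add_apply, rmapQ_tmul, BalTensor.tmul_add]

end RMapQ

theorem BalTensor.rid_rmapQ_smul_id {B : Type u} [Ring B] {M : Type u} [AddCommGroup M]
    [Module Bᵐᵒᵖ M] (b : Bᵐᵒᵖ) (z : BalTensor B M B) :
    BalTensor.rid B M (rmapQ B M B B (b • LinearMap.id) z) = b • BalTensor.rid B M z := by
  induction z using BalTensor.induction_on with
  | zero => simp only [map_zero, smul_zero]
  | tmul m b' =>
    rw [rmapQ_tmul, BalTensor.rid_tmul, BalTensor.rid_tmul, LinearMap.smul_apply,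
      LinearMap.id_apply, MulOpposite.smul_eq_mul_unop, op_mul, op_unop, mul_smul]
  | add z z' hz hz' => simp only [map_add, smul_add, hz, hz']

theorem projective_dual (A M : Type u) [Ring A] [AddCommGroup M] [Module A M]
    [Module.Finite A M] [Module.Projective A M] : Module.Projective Aᵐᵒᵖ (M →ₗ[A] A) := by
  obtain ⟨n, π, hπ⟩ := Module.Finite.exists_fin' A M
  obtain ⟨σ, hσ⟩ := Module.projective_lifting_property π LinearMap.id hπ
  let opEquiv : A ≃ₗ[Aᵐᵒᵖ] Aᵐᵒᵖ :=
    { MulOpposite.opAddEquiv with map_smul' := fun _ _ => rfl }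
  have : Module.Projective Aᵐᵒᵖ ((Fin n → A) →ₗ[A] A) :=
    .of_equiv' ((LinearEquiv.piCongrRight fun _ => opEquiv).symm.trans
      ((Pi.basisFun A (Fin n)).constr Aᵐᵒᵖ))
  refine .of_split (LinearMap.lcomp Aᵐᵒᵖ A π) (LinearMap.lcomp Aᵐᵒᵖ A σ) ?_
  ext q m
  exact congrArg q (LinearMap.congr_fun hσ m)

section NaturalHomTensorEquiv

variable {A : Type u} [Ring A] {M : Type u} [AddCommGroup M] [Module A M]
  {N : Type u} [AddCommGroup N] [Module Aᵐᵒᵖ N]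

variable (A M N) in
def IsNaturalHomTensorEquiv (E : ∀ Y : FinModuleData A, (M →ₗ[A] Y.X) ≃ BalTensor A N Y.X) :
    Prop :=
  ∀ (Y Y' : FinModuleData A) (g : Y.X →ₗ[A] Y'.X) (h : M →ₗ[A] Y.X),
    E Y' (g.comp h) = rmapQ A N Y.X Y'.X g (E Y h)

namespace IsNaturalHomTensorEquiv

variable {E : ∀ Y : FinModuleData A, (M →ₗ[A] Y.X) ≃ BalTensor A N Y.X}
  (hE : IsNaturalHomTensorEquiv A M N E)
include hE

theorem map_add (Y : FinModuleData A) (h h' : M →ₗ[A] Y.X) :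
    E Y (h + h') = E Y h + E Y h' := by
  let Y2 : FinModuleData A := ⟨Y.X × Y.X⟩
  have hfst : (LinearMap.fst A Y.X Y.X).comp (h.prod h') = h := rfl
  have hsnd : (LinearMap.snd A Y.X Y.X).comp (h.prod h') = h' := rfl
  -- `h + h'` factors through the sum map `Y × Y → Y`, on which `N ⊗_A −` is additive.
  calc E Y (h + h')
        = E Y ((LinearMap.fst A Y.X Y.X + LinearMap.snd A Y.X Y.X).comp (h.prod h')) := rfl
    _ = rmapQ A N Y2.X Y.X (LinearMap.fst A Y.X Y.X) (E Y2 (h.prod h'))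
        + rmapQ A N Y2.X Y.X (LinearMap.snd A Y.X Y.X) (E Y2 (h.prod h')) := by
      rw [hE Y2 Y, rmapQ_add]; rfl
    _ = E Y h + E Y h' := by rw [← hE, ← hE, hfst, hsnd]

theorem projective [Module.Finite A M] : Module.Projective A M := by
  obtain ⟨n, π, hπ⟩ := Module.Finite.exists_fin' A M
  obtain ⟨t, ht⟩ := rmapQ_surjective (M := N) hπ (E ⟨M⟩ LinearMap.id)
  refine .of_split ((E ⟨Fin n → A⟩).symm t) π ((E ⟨M⟩).injective ?_)
  rw [hE ⟨Fin n → A⟩ ⟨M⟩, Equiv.apply_symm_apply, ht]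

def dualEquiv : (M →ₗ[A] A) ≃ₗ[Aᵐᵒᵖ] N where
  __ := (E ⟨A⟩).trans (BalTensor.rid A N).toEquiv
  map_add' h h' := by simp [hE.map_add]
  map_smul' a h := by
    have hcomp : a • h = (a • LinearMap.id).comp h :=
      (LinearMap.smul_comp a LinearMap.id h).symm
    simp only [Equiv.toFun_as_coe, Equiv.trans_apply, AddEquiv.toEquiv_eq_coe,
      AddEquiv.coe_toEquiv, RingHom.id_apply, hcomp, hE ⟨A⟩ ⟨A⟩]
    exact BalTensor.rid_rmapQ_smul_id a _

theorem projective_op [Module.Finite A M] [Module.Projective A M] :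
    Module.Projective Aᵐᵒᵖ N :=
  have := projective_dual A M
  .of_equiv' hE.dualEquiv

end IsNaturalHomTensorEquiv

end NaturalHomTensorEquiv

theorem TensorAdjunction.exists_isNaturalHomTensorEquiv {A B M N : Type u} [Ring A] [Ring B]
    [AddCommGroup M] [Module A M] [Module Bᵐᵒᵖ M] [SMulCommClass A Bᵐᵒᵖ M]
    [AddCommGroup N] [Module B N] [Module Aᵐᵒᵖ N] [SMulCommClass B Aᵐᵒᵖ N]
    (hadj : TensorAdjunction A B M N) : ∃ E, IsNaturalHomTensorEquiv A M N E := by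
  obtain ⟨e, -, hnat⟩ := hadj
  let ridA : BalTensor B M B ≃ₗ[A] M := (BalTensor.rid B M).toLinearEquiv BalTensor.rid_smul
  -- `E Y h` is the value at `1 : B` of the adjoint of `h ∘ ridA : M ⊗_B B → Y`.
  refine ⟨fun Y => (LinearEquiv.congrLeft Y.X ℕ ridA.symm).toEquiv.trans
    ((e ⟨B⟩ Y).trans (LinearMap.ringLmapEquivSelf B ℕ _).toEquiv), fun Y Y' g h => ?_⟩
  change e ⟨B⟩ Y' ((g.comp h).comp ridA.toLinearMap) 1 = rmapA A N B Y.X Y'.X g _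
  rw [LinearMap.comp_assoc, hnat]
  rfl

theorem stmt7_general (k A B M N : Type u) [Field k]
    [Ring A] [Algebra k A]
    [Ring B] [Algebra k B]
    [AddCommGroup M] [Module k M] [Module A M] [Module Bᵐᵒᵖ M]
    [SMulCommClass A Bᵐᵒᵖ M] [IsScalarTower k A M] [IsScalarTower k Bᵐᵒᵖ M]
    [FiniteDimensional k M]
    [AddCommGroup N] [Module k N] [Module B N] [Module Aᵐᵒᵖ N]
    [SMulCommClass B Aᵐᵒᵖ N] [IsScalarTower k B N] [IsScalarTower k Aᵐᵒᵖ N]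
    [FiniteDimensional k N]
    (hA : IsBimodSummand A A A (BalTensor B M N))
    (hB : IsBimodSummand B B B (BalTensor A N M))
    (hadj₁ : TensorAdjunction A B M N) (hadj₂ : TensorAdjunction B A N M) :
    (Module.Projective A M ∧ Module.Projective Bᵐᵒᵖ M ∧
      Module.Projective B N ∧ Module.Projective Aᵐᵒᵖ N) ∧
    SymSepEquiv k A B := by
  have : Module.Finite A M := .of_restrictScalars_finite k A M
  have : Module.Finite B N := .of_restrictScalars_finite k B N
  obtain ⟨E₁, hE₁⟩ := hadj₁.exists_isNaturalHomTensorEquiv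
  obtain ⟨E₂, hE₂⟩ := hadj₂.exists_isNaturalHomTensorEquiv
  have hM : Module.Projective A M := hE₁.projective
  have hN : Module.Projective B N := hE₂.projective
  have hMop : Module.Projective Bᵐᵒᵖ M := hE₂.projective_op
  have hNop : Module.Projective Aᵐᵒᵖ N := hE₁.projective_op
  exact ⟨⟨hM, hMop, hN, hNop⟩, ⟨M⟩, ⟨N⟩, hM, hMop, hN, hNop, hA, hB, hadj₁, hadj₂⟩

/-- If `A` is a direct summand of `M ⊗_B N`, `B` is a direct summand of
`N ⊗_A M`, and the functors `M ⊗_B −` and `N ⊗_A −` are biadjoint, then `M` and `N` are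
projective on either side; consequently `A` and `B` are symmetrically separably equivalent. -/
theorem stmt7 (k A B M N : Type u) [Field k]
    [Ring A] [Algebra k A] [FiniteDimensional k A]
    [Ring B] [Algebra k B] [FiniteDimensional k B]
    [AddCommGroup M] [Module k M] [Module A M] [Module Bᵐᵒᵖ M]
    [SMulCommClass A Bᵐᵒᵖ M] [IsScalarTower k A M] [IsScalarTower k Bᵐᵒᵖ M]
    [FiniteDimensional k M]
    [AddCommGroup N] [Module k N] [Module B N] [Module Aᵐᵒᵖ N]
    [SMulCommClass B Aᵐᵒᵖ N] [IsScalarTower k B N] [IsScalarTower k Aᵐᵒᵖ N]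
    [FiniteDimensional k N]
    (hA : IsBimodSummand A A A (BalTensor B M N))
    (hB : IsBimodSummand B B B (BalTensor A N M))
    (hadj₁ : TensorAdjunction A B M N) (hadj₂ : TensorAdjunction B A N M) :
    (Module.Projective A M ∧ Module.Projective Bᵐᵒᵖ M ∧
      Module.Projective B N ∧ Module.Projective Aᵐᵒᵖ N) ∧
    SymSepEquiv k A B :=
  stmt7_general k A B M N hA hB hadj₁ hadj₂

end
end JJ
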